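/- arXiv:0909.0168 — 2 statements merged into one kernel-verified Lean document; each statement's English description precedes it below -/
import Mathlib

section
/- For every n ≥ 4, every index i with 2 ≤ i ≤ n−2, and all integers e₁, …, eₙ with eᵢ = e_{i+1} = 1, one has f(e₁, …, eₙ) = −f(e₁, …, e_{i−2}, e_{i−1} + e_{i+2} − 1, e_{i+3}, …, eₙ), where the right-hand tuple has length n−3 (the two consecutive entries equal to 1 are deleted and their outer neighbours are merged into e_{i−1} + e_{i+2} − 1). -/
/-- `plumbDet n e` is the determinant `f(e_1, ..., e_n)` of the `n x n` tridiagonal matrix whose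
diagonal entries are `e 1, ..., e n` (the tuple is indexed starting from `1`) and whose sub- and
super-diagonal entries all equal `1`.  By convention `plumbDet 0 e = 1` and
`plumbDet 1 e = e 1`. -/
def plumbDet (n : ℕ) (e : ℕ → ℤ) : ℤ :=
  Matrix.det (Matrix.of fun i j : Fin n =>
    if (i : ℕ) = (j : ℕ) then e ((i : ℕ) + 1)
    else if (i : ℕ) + 1 = (j : ℕ) ∨ (j : ℕ) + 1 = (i : ℕ) then 1 else 0)


lemma plumbDet_zero (e : ℕ → ℤ) : plumbDet 0 e = 1 := by
  simp [plumbDet]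

lemma plumbDet_one (e : ℕ → ℤ) : plumbDet 1 e = e 1 := by
  simp [plumbDet]

lemma plumbDet_congr (n : ℕ) (e e' : ℕ → ℤ) (h : ∀ j, 1 ≤ j → j ≤ n → e j = e' j) :
    plumbDet n e = plumbDet n e' := by
  unfold plumbDet
  congr 1
  ext i j
  simp only [Matrix.of_apply]
  split
  · exact h _ (by omega) (by omega)
  · rfl

lemma plumbDet_rec (n : ℕ) (e : ℕ → ℤ) :
    plumbDet (n+2) e = e 1 * plumbDet (n+1) (fun k => e (k+1)) - plumbDet n (fun k => e (k+2)) := by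
  unfold plumbDet
  set M : Matrix (Fin (n+2)) (Fin (n+2)) ℤ := Matrix.of fun i j : Fin (n+2) =>
    if (i : ℕ) = (j : ℕ) then e ((i : ℕ) + 1)
    else if (i : ℕ) + 1 = (j : ℕ) ∨ (j : ℕ) + 1 = (i : ℕ) then 1 else 0 with hM
  have h00 : M 0 0 = e 1 := by simp [hM]
  have h01 : M 0 (Fin.succ 0) = 1 := by simp [hM]
  have hsv : ∀ j : Fin (n+1), (((Fin.succ (0 : Fin (n+1))).succAbove j : Fin (n+2)) : ℕ)
      = if (j : ℕ) = 0 then 0 else (j : ℕ) + 1 := by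
    intro j
    simp [Fin.succAbove, Fin.lt_def]
    split_ifs <;> simp_all
  have hA : (M.submatrix Fin.succ (Fin.succAbove 0)) = Matrix.of (fun i j : Fin (n+1) =>
      if (i : ℕ) = (j : ℕ) then e ((i : ℕ) + 1 + 1)
      else if (i : ℕ) + 1 = (j : ℕ) ∨ (j : ℕ) + 1 = (i : ℕ) then 1 else 0) := by
    ext i j
    simp only [hM, Matrix.submatrix_apply, Matrix.of_apply, Fin.succAbove_zero, Fin.val_succ]
    split_ifs with h1 h2 h3 h4 h5 <;> first | rfl | omega
  have hB : ((M.submatrix Fin.succ (Fin.succ 0).succAbove).det) =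
      plumbDet n (fun k => e (k+2)) := by
    rw [Matrix.det_succ_column_zero, Fin.sum_univ_succ]
    have ht : ∀ i : Fin n, (M.submatrix Fin.succ (Fin.succ 0).succAbove) i.succ 0 = 0 := by
      intro i
      simp only [Matrix.submatrix_apply, hM, Matrix.of_apply]
      rw [show (((Fin.succ (0:Fin (n+1))).succAbove 0 : Fin (n+2)) : ℕ) = 0 from by
        rw [hsv]; simp]
      simp
    have h0 : (M.submatrix Fin.succ (Fin.succ 0).succAbove) 0 0 = 1 := by
      simp only [Matrix.submatrix_apply, hM, Matrix.of_apply]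
      rw [show (((Fin.succ (0:Fin (n+1))).succAbove 0 : Fin (n+2)) : ℕ) = 0 from by
        rw [hsv]; simp]
      simp
    have hsub : ((M.submatrix Fin.succ (Fin.succ 0).succAbove).submatrix (Fin.succAbove 0) Fin.succ)
        = Matrix.of (fun i j : Fin n =>
      if (i : ℕ) = (j : ℕ) then e ((i : ℕ) + 1 + 2)
      else if (i : ℕ) + 1 = (j : ℕ) ∨ (j : ℕ) + 1 = (i : ℕ) then 1 else 0) := by
      ext i j
      simp only [Matrix.submatrix_apply, hM, Matrix.of_apply, Fin.succAbove_zero, Fin.val_succ]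
      rw [hsv]
      simp only [Fin.val_succ]
      have : ¬ ((j : ℕ) + 1 = 0) := by omega
      rw [if_neg this]
      split_ifs <;> first | rfl | omega
    rw [Finset.sum_eq_zero (fun i _ => by rw [ht i]; ring)]
    rw [h0, hsub]
    simp [plumbDet]
  rw [Matrix.det_succ_row_zero, Fin.sum_univ_succ, Fin.sum_univ_succ]
  rw [Finset.sum_eq_zero (fun i _ => by
    have : M 0 i.succ.succ = 0 := by simp [hM]
    rw [this]; ring)]
  rw [h00, h01, hA, hB]
  simp [plumbDet]
  ring

lemma key : ∀ k m : ℕ, ∀ e : ℕ → ℤ, e (k+2) = 1 → e (k+3) = 1 →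
    plumbDet (m+k+4) e = -plumbDet (m+k+1) (fun j =>
      if j < k+1 then e j else if j = k+1 then e (k+1) + e (k+4) - 1 else e (j+3)) := by
  intro k
  induction k using Nat.strong_induction_on with
  | _ k IH =>
  rcases k with _ | _ | k
  · -- k = 0 : ones at positions 2, 3
    intro m e h2' h3'
    have h2 : e 2 = 1 := h2'
    have h3 : e 3 = 1 := h3'
    show plumbDet (m+4) e = -plumbDet (m+1) (fun j =>
      if j < 1 then e j else if j = 1 then e 1 + e 4 - 1 else e (j+3))
    set E : ℕ → ℤ := fun j =>
      if j < 1 then e j else if j = 1 then e 1 + e 4 - 1 else e (j+3) with hE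
    rcases m with _ | p
    · have r1 : plumbDet 4 e
          = e 1 * plumbDet 3 (fun j => e (j+1)) - plumbDet 2 (fun j => e (j+2)) :=
        plumbDet_rec 2 e
      have r2 : plumbDet 3 (fun j => e (j+1))
          = e 2 * plumbDet 2 (fun j => e (j+2)) - plumbDet 1 (fun j => e (j+3)) :=
        plumbDet_rec 1 _
      have r3 : plumbDet 2 (fun j => e (j+2))
          = e 3 * plumbDet 1 (fun j => e (j+3)) - plumbDet 0 (fun j => e (j+4)) :=
        plumbDet_rec 0 _
      have p1 : plumbDet 1 (fun j => e (j+3)) = e 4 := plumbDet_one _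
      have p0 : plumbDet 0 (fun j => e (j+4)) = 1 := plumbDet_zero _
      have q : plumbDet 1 E = e 1 + e 4 - 1 := by
        rw [plumbDet_one]
        simp only [hE]; norm_num
      rw [r1, r2, r3, p1, p0, h2, h3, q]; ring
    · have r1 : plumbDet (p+5) e
          = e 1 * plumbDet (p+4) (fun j => e (j+1)) - plumbDet (p+3) (fun j => e (j+2)) :=
        plumbDet_rec (p+3) e
      have r2 : plumbDet (p+4) (fun j => e (j+1))
          = e 2 * plumbDet (p+3) (fun j => e (j+2)) - plumbDet (p+2) (fun j => e (j+3)) :=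
        plumbDet_rec (p+2) _
      have r3 : plumbDet (p+3) (fun j => e (j+2))
          = e 3 * plumbDet (p+2) (fun j => e (j+3)) - plumbDet (p+1) (fun j => e (j+4)) :=
        plumbDet_rec (p+1) _
      have r4 : plumbDet (p+2) (fun j => e (j+3))
          = e 4 * plumbDet (p+1) (fun j => e (j+4)) - plumbDet p (fun j => e (j+5)) :=
        plumbDet_rec p _
      have rr : plumbDet (p+2) E
          = E 1 * plumbDet (p+1) (fun j => E (j+1)) - plumbDet p (fun j => E (j+2)) :=
        plumbDet_rec p E
      have hE1 : E 1 = e 1 + e 4 - 1 := by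
        simp only [hE]; norm_num
      have c1 : plumbDet (p+1) (fun j => E (j+1)) = plumbDet (p+1) (fun j => e (j+4)) :=
        plumbDet_congr _ _ _ (fun j hj1 hj2 => by
          simp only [hE]; split_ifs <;> first | rfl | (exfalso; omega))
      have c2 : plumbDet p (fun j => E (j+2)) = plumbDet p (fun j => e (j+5)) :=
        plumbDet_congr _ _ _ (fun j hj1 hj2 => by
          simp only [hE]; split_ifs <;> first | rfl | (exfalso; omega))
      rw [r1, r2, r3, r4, h2, h3, rr, hE1, c1, c2]; ring
  · -- k = 1 : ones at positions 3, 4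
    intro m e h3' h4'
    have h3 : e 3 = 1 := h3'
    have h4 : e 4 = 1 := h4'
    show plumbDet (m+5) e = -plumbDet (m+2) (fun j =>
      if j < 2 then e j else if j = 2 then e 2 + e 5 - 1 else e (j+3))
    set E : ℕ → ℤ := fun j =>
      if j < 2 then e j else if j = 2 then e 2 + e 5 - 1 else e (j+3) with hE
    rcases m with _ | p
    · have r1 : plumbDet 5 e
          = e 1 * plumbDet 4 (fun j => e (j+1)) - plumbDet 3 (fun j => e (j+2)) :=
        plumbDet_rec 3 e
      have r2 : plumbDet 4 (fun j => e (j+1))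
          = e 2 * plumbDet 3 (fun j => e (j+2)) - plumbDet 2 (fun j => e (j+3)) :=
        plumbDet_rec 2 _
      have r3 : plumbDet 3 (fun j => e (j+2))
          = e 3 * plumbDet 2 (fun j => e (j+3)) - plumbDet 1 (fun j => e (j+4)) :=
        plumbDet_rec 1 _
      have r4 : plumbDet 2 (fun j => e (j+3))
          = e 4 * plumbDet 1 (fun j => e (j+4)) - plumbDet 0 (fun j => e (j+5)) :=
        plumbDet_rec 0 _
      have p1 : plumbDet 1 (fun j => e (j+4)) = e 5 := plumbDet_one _
      have p0 : plumbDet 0 (fun j => e (j+5)) = 1 := plumbDet_zero _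
      have rr : plumbDet 2 E
          = E 1 * plumbDet 1 (fun j => E (j+1)) - plumbDet 0 (fun j => E (j+2)) :=
        plumbDet_rec 0 E
      have hE1 : E 1 = e 1 := by simp only [hE]; norm_num
      have q1 : plumbDet 1 (fun j => E (j+1)) = e 2 + e 5 - 1 := by
        rw [plumbDet_one]; simp only [hE]; norm_num
      have q0 : plumbDet 0 (fun j => E (j+2)) = 1 := plumbDet_zero _
      rw [r1, r2, r3, r4, p1, p0, h3, h4, rr, hE1, q1, q0]; ring
    · have r1 : plumbDet (p+6) e
          = e 1 * plumbDet (p+5) (fun j => e (j+1)) - plumbDet (p+4) (fun j => e (j+2)) :=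
        plumbDet_rec (p+4) e
      have r2 : plumbDet (p+5) (fun j => e (j+1))
          = e 2 * plumbDet (p+4) (fun j => e (j+2)) - plumbDet (p+3) (fun j => e (j+3)) :=
        plumbDet_rec (p+3) _
      have r3 : plumbDet (p+4) (fun j => e (j+2))
          = e 3 * plumbDet (p+3) (fun j => e (j+3)) - plumbDet (p+2) (fun j => e (j+4)) :=
        plumbDet_rec (p+2) _
      have r4 : plumbDet (p+3) (fun j => e (j+3))
          = e 4 * plumbDet (p+2) (fun j => e (j+4)) - plumbDet (p+1) (fun j => e (j+5)) :=
        plumbDet_rec (p+1) _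
      have r5 : plumbDet (p+2) (fun j => e (j+4))
          = e 5 * plumbDet (p+1) (fun j => e (j+5)) - plumbDet p (fun j => e (j+6)) :=
        plumbDet_rec p _
      have rr : plumbDet (p+3) E
          = E 1 * plumbDet (p+2) (fun j => E (j+1)) - plumbDet (p+1) (fun j => E (j+2)) :=
        plumbDet_rec (p+1) E
      have hE1 : E 1 = e 1 := by simp only [hE]; norm_num
      have c1 : plumbDet (p+2) (fun j => E (j+1))
          = plumbDet (p+2) (fun j => if j = 1 then e 2 + e 5 - 1 else e (j+4)) :=
        plumbDet_congr _ _ _ (fun j hj1 hj2 => by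
          simp only [hE]; split_ifs <;> first | rfl | (exfalso; omega))
      have c2 : plumbDet (p+1) (fun j => E (j+2))
          = plumbDet (p+1) (fun j => e (j+5)) :=
        plumbDet_congr _ _ _ (fun j hj1 hj2 => by
          simp only [hE]; split_ifs <;> first | rfl | (exfalso; omega))
      have rr2 : plumbDet (p+2) (fun j => if j = 1 then e 2 + e 5 - 1 else e (j+4))
          = (e 2 + e 5 - 1)
              * plumbDet (p+1) (fun j => if j + 1 = 1 then e 2 + e 5 - 1 else e (j+5))
            - plumbDet p (fun j => if j + 2 = 1 then e 2 + e 5 - 1 else e (j+6)) :=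
        plumbDet_rec p _
      have c3 : plumbDet (p+1) (fun j => if j + 1 = 1 then e 2 + e 5 - 1 else e (j+5))
          = plumbDet (p+1) (fun j => e (j+5)) :=
        plumbDet_congr _ _ _ (fun j hj1 hj2 => by
          split_ifs <;> first | rfl | (exfalso; omega))
      have c4 : plumbDet p (fun j => if j + 2 = 1 then e 2 + e 5 - 1 else e (j+6))
          = plumbDet p (fun j => e (j+6)) :=
        plumbDet_congr _ _ _ (fun j hj1 hj2 => by
          split_ifs <;> first | rfl | (exfalso; omega))
      rw [r1, r2, r3, r4, r5, h3, h4, rr, hE1, c1, rr2, c2, c3, c4]; ring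
  · -- step : ones at positions k+4, k+5
    intro m e h2' h3'
    have h2 : e (k+4) = 1 := h2'
    have h3 : e (k+5) = 1 := h3'
    show plumbDet (m+k+6) e = -plumbDet (m+k+3) (fun j =>
      if j < k+3 then e j else if j = k+3 then e (k+3) + e (k+6) - 1 else e (j+3))
    set E : ℕ → ℤ := fun j =>
      if j < k+3 then e j else if j = k+3 then e (k+3) + e (k+6) - 1 else e (j+3) with hE
    have r1 : plumbDet (m+k+6) e
        = e 1 * plumbDet (m+k+5) (fun j => e (j+1)) - plumbDet (m+k+4) (fun j => e (j+2)) :=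
      plumbDet_rec (m+k+4) e
    have ih1 : plumbDet (m+k+5) (fun j => e (j+1))
        = -plumbDet (m+k+2) (fun j =>
            if j < k+2 then e (j+1) else if j = k+2 then e (k+3) + e (k+6) - 1 else e (j+4)) :=
      IH (k+1) (by omega) m (fun j => e (j+1)) h2 h3
    have ih2 : plumbDet (m+k+4) (fun j => e (j+2))
        = -plumbDet (m+k+1) (fun j =>
            if j < k+1 then e (j+2) else if j = k+1 then e (k+3) + e (k+6) - 1 else e (j+5)) :=
      IH k (by omega) m (fun j => e (j+2)) h2 h3
    have rr : plumbDet (m+k+3) E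
        = E 1 * plumbDet (m+k+2) (fun j => E (j+1)) - plumbDet (m+k+1) (fun j => E (j+2)) :=
      plumbDet_rec (m+k+1) E
    have hE1 : E 1 = e 1 := by
      simp only [hE]; split_ifs <;> first | rfl | (exfalso; omega)
    have c1 : plumbDet (m+k+2) (fun j => E (j+1))
        = plumbDet (m+k+2) (fun j =>
            if j < k+2 then e (j+1) else if j = k+2 then e (k+3) + e (k+6) - 1 else e (j+4)) :=
      plumbDet_congr _ _ _ (fun j hj1 hj2 => by
        simp only [hE]; split_ifs <;> first | rfl | (exfalso; omega))
    have c2 : plumbDet (m+k+1) (fun j => E (j+2))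
        = plumbDet (m+k+1) (fun j =>
            if j < k+1 then e (j+2) else if j = k+1 then e (k+3) + e (k+6) - 1 else e (j+5)) :=
      plumbDet_congr _ _ _ (fun j hj1 hj2 => by
        simp only [hE]; split_ifs <;> first | rfl | (exfalso; omega))
    rw [r1, ih1, ih2, rr, hE1, c1, c2]; ring

/-- For every n ≥ 4, every index i with 2 ≤ i ≤ n-2, and all integers e_1, ..., e_n with
e_i = e_{i+1} = 1, one has
f(e_1,...,e_n) = -f(e_1,...,e_{i-2}, e_{i-1}+e_{i+2}-1, e_{i+3},...,e_n),
where the right-hand tuple has length n-3. -/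
theorem plumbDet_delete_one_one (n : ℕ) (hn : 4 ≤ n) (i : ℕ) (hi1 : 2 ≤ i) (hi2 : i ≤ n - 2)
    (e : ℕ → ℤ) (hei : e i = 1) (hei1 : e (i + 1) = 1) :
    plumbDet n e = - plumbDet (n - 3) (fun j =>
      if j < i - 1 then e j
      else if j = i - 1 then e (i - 1) + e (i + 2) - 1
      else e (j + 3)) := by
  obtain ⟨k, rfl⟩ : ∃ k, i = k + 2 := ⟨i - 2, by omega⟩
  obtain ⟨m, rfl⟩ : ∃ m, n = m + k + 4 := ⟨n - k - 4, by omega⟩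
  have h1 : m + k + 4 - 3 = m + k + 1 := by omega
  have h2 : k + 2 - 1 = k + 1 := by omega
  rw [h1, h2]
  exact key k m e hei hei1
end

section
/- Let n ≥ 1 and let e₁, …, eₙ be integers with |f(e₁, …, eₙ)| ≤ 1. Then |eᵢ| ≤ 1 for at least one index i. -/
theorem Matrix.det_succ_column_zero_of_eq_zero {R : Type*} [CommRing R] {n : ℕ}
    (A : Matrix (Fin (n + 1)) (Fin (n + 1)) R) (h : ∀ i : Fin n, A i.succ 0 = 0) :
    A.det = A 0 0 * (A.submatrix Fin.succ Fin.succ).det := by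
  rw [Matrix.det_succ_column_zero, Fin.sum_univ_succ]
  simp [h]

def plumbMatrix (n : ℕ) (e : ℕ → ℤ) : Matrix (Fin n) (Fin n) ℤ :=
  Matrix.of fun i j : Fin n =>
    if (i : ℕ) = (j : ℕ) then e ((i : ℕ) + 1)
    else if (i : ℕ) + 1 = (j : ℕ) ∨ (j : ℕ) + 1 = (i : ℕ) then 1 else 0

namespace plumbMatrix

variable (n : ℕ) (e : ℕ → ℤ)

theorem det_eq_plumbDet : (plumbMatrix n e).det = plumbDet n e := rfl

theorem submatrix_succ_succ :
    (plumbMatrix (n + 1) e).submatrix Fin.succ Fin.succ = plumbMatrix n (fun k => e (k + 1)) := by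
  ext i j
  simp only [plumbMatrix, Matrix.submatrix_apply, Matrix.of_apply, Fin.val_succ]
  split_ifs <;> first | rfl | omega

theorem apply_zero_succ_succ (j : Fin n) : plumbMatrix (n + 2) e 0 j.succ.succ = 0 := by
  simp [plumbMatrix]

theorem apply_succ_succ_zero (i : Fin n) : plumbMatrix (n + 2) e i.succ.succ 0 = 0 := by
  simp [plumbMatrix]

theorem det_submatrix_succ_succAbove_one :
    ((plumbMatrix (n + 2) e).submatrix Fin.succ (Fin.succAbove 1)).det =
      plumbDet n (fun k => e (k + 2)) := by
  have hcorner : plumbMatrix (n + 2) e 1 0 = 1 := by simp [plumbMatrix]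
  have hminor : ((plumbMatrix (n + 2) e).submatrix Fin.succ (Fin.succAbove 1)).submatrix
      Fin.succ Fin.succ = plumbMatrix n (fun k => e (k + 2)) := by
    have hcols : Fin.succAbove 1 ∘ Fin.succ = (Fin.succ ∘ Fin.succ : Fin n → Fin (n + 2)) :=
      funext Fin.one_succAbove_succ
    rw [Matrix.submatrix_submatrix, hcols, ← Matrix.submatrix_submatrix, submatrix_succ_succ,
      submatrix_succ_succ]
  -- the first column of this minor is `(1, 0, …, 0)`
  rw [Matrix.det_succ_column_zero_of_eq_zero _ (apply_succ_succ_zero n e), hminor,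
    Matrix.submatrix_apply, Fin.one_succAbove_zero, Fin.succ_zero_eq_one, hcorner, one_mul,
    det_eq_plumbDet]

end plumbMatrix

theorem plumbDet_add_two (n : ℕ) (e : ℕ → ℤ) :
    plumbDet (n + 2) e =
      e 1 * plumbDet (n + 1) (fun k => e (k + 1)) - plumbDet n (fun k => e (k + 2)) := by
  have hdiag : plumbMatrix (n + 2) e 0 0 = e 1 := rfl
  have hfirst : plumbMatrix (n + 2) e 0 1 = 1 := by simp [plumbMatrix]
  rw [← plumbMatrix.det_eq_plumbDet, Matrix.det_succ_row_zero, Fin.sum_univ_succ,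
    Fin.sum_univ_succ, Fin.succ_zero_eq_one, hfirst, Fin.succAbove_zero,
    plumbMatrix.submatrix_succ_succ, plumbMatrix.det_submatrix_succ_succAbove_one]
  simp only [plumbMatrix.apply_zero_succ_succ, hdiag, plumbMatrix.det_eq_plumbDet, mul_zero,
    zero_mul, Finset.sum_const_zero, Fin.val_zero, Fin.val_one, pow_zero, pow_one]
  ring

theorem abs_plumbDet_lt_abs_plumbDet_succ (n : ℕ) (e : ℕ → ℤ)
    (he : ∀ i, 1 ≤ i → i ≤ n + 1 → 1 < |e i|) :
    |plumbDet n (fun k => e (k + 1))| < |plumbDet (n + 1) e| := by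
  induction n generalizing e with
  | zero => simpa [plumbDet] using he 1 le_rfl le_rfl
  | succ n ih =>
    set A := plumbDet (n + 1) (fun k => e (k + 1))
    set B := plumbDet n (fun k => e (k + 2))
    have hBA : |B| < |A| := by
      simpa using ih (fun k => e (k + 1)) fun i hi₁ hi₂ => he (i + 1) (by omega) (by omega)
    have he₁ : 2 ≤ |e 1| := he 1 le_rfl (by omega)
    calc |A| < 2 * |A| - |B| := by linarith
      _ ≤ |e 1| * |A| - |B| := by gcongr
      _ = |e 1 * A| - |B| := by rw [abs_mul]
      _ ≤ |e 1 * A - B| := abs_sub_abs_le_abs_sub _ _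
      _ = |plumbDet (n + 2) e| := by rw [plumbDet_add_two]

theorem le_abs_plumbDet (n : ℕ) (e : ℕ → ℤ) (he : ∀ i, 1 ≤ i → i ≤ n → 1 < |e i|) :
    n + 1 ≤ |plumbDet n e| := by
  induction n generalizing e with
  | zero => simp [plumbDet]
  | succ n ih =>
    have hshift := ih (fun k => e (k + 1)) fun i hi₁ hi₂ => he (i + 1) (by omega) (by omega)
    have hgrow := abs_plumbDet_lt_abs_plumbDet_succ n e he
    push_cast
    linarith

/-- Let n ≥ 1 and let e_1, ..., e_n be integers with |f(e_1, ..., e_n)| ≤ 1.  Then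
|e_i| ≤ 1 for at least one index i. -/
theorem plumbDet_small_entry (n : ℕ) (hn : 1 ≤ n) (e : ℕ → ℤ)
    (hf : |plumbDet n e| ≤ 1) :
    ∃ i, 1 ≤ i ∧ i ≤ n ∧ |e i| ≤ 1 := by
  by_contra! h
  have := le_abs_plumbDet n e h
  omega
end
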